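/- Let A ≤ B ≤ M be submodules of a torsion-free R-module M with A an RD*-submodule of M. Then B is an RD*-submodule of M if and only if B/A is an RD*-submodule of M/A. -/

import Mathlib

open Cardinal

universe u v

variable {R : Type u} [CommRing R] [IsDomain R]
variable {M : Type v} [AddCommGroup M] [Module R M]

/-- `A` is relatively divisible (RD) in `M`. -/
def IsRD (A : Submodule R M) : Prop :=
  ∀ (r : R) (m : M), r • m ∈ A → ∃ a ∈ A, r • a = r • m

def IsRDWithin (A N : Submodule R M) : Prop :=
  A ≤ N ∧ ∀ (r : R) (m : M), m ∈ N → r • m ∈ A → ∃ a ∈ A, r • a = r • m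

def IsRDStar (A : Submodule R M) : Prop :=
  IsRD A ∧ ∀ Q : Submodule R (M ⧸ A), Module.rank R ↥Q < ℵ₀ →
    ∃ C : Submodule R M, Module.rank R ↥C ≤ ℵ₀ ∧ C.map A.mkQ = Q

def IsRDStarWithin (A N : Submodule R M) : Prop :=
  IsRDWithin A N ∧ ∀ Q : Submodule R (M ⧸ A), Q ≤ N.map A.mkQ →
    Module.rank R ↥Q < ℵ₀ →
    ∃ C : Submodule R M, C ≤ N ∧ Module.rank R ↥C ≤ ℵ₀ ∧ C.map A.mkQ = Q

def IsSummand (A : Submodule R M) : Prop :=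
  ∃ P : Submodule R M, A ⊓ P = ⊥ ∧ A ⊔ P = ⊤

def IsSummandWithin (A N : Submodule R M) : Prop :=
  A ≤ N ∧ ∃ P ≤ N, A ⊓ P = ⊥ ∧ A ⊔ P = N

/-- A G*(ℵ₀)-family of RD-submodules of `M`. -/
def IsGStarFamily (𝒢 : Set (Submodule R M)) : Prop :=
  (∀ A ∈ 𝒢, IsRD A) ∧ (⊥ : Submodule R M) ∈ 𝒢 ∧ (⊤ : Submodule R M) ∈ 𝒢 ∧
  (∀ c ⊆ 𝒢, IsChain (· ≤ ·) c → c.Nonempty → sSup c ∈ 𝒢) ∧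
  ∀ C ∈ 𝒢, ∀ X : Set M, X.Countable →
    ∃ B ∈ 𝒢, C ≤ B ∧ X ⊆ ↑B ∧ Module.rank R ↥(B.map C.mkQ) ≤ ℵ₀

def IsGStarFamilyWithin (𝒢 : Set (Submodule R M)) (N : Submodule R M) : Prop :=
  (∀ A ∈ 𝒢, IsRDWithin A N) ∧ (⊥ : Submodule R M) ∈ 𝒢 ∧ N ∈ 𝒢 ∧
  (∀ c ⊆ 𝒢, IsChain (· ≤ ·) c → c.Nonempty → sSup c ∈ 𝒢) ∧
  ∀ C ∈ 𝒢, ∀ X : Set M, X ⊆ ↑N → X.Countable →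
    ∃ B ∈ 𝒢, C ≤ B ∧ X ⊆ ↑B ∧ Module.rank R ↥(B.map C.mkQ) ≤ ℵ₀

def IsUltraBalanced (A : Submodule R M) : Prop :=
  IsRD A ∧ ∀ C : Submodule R M, IsRD C → A ≤ C →
    Module.rank R ↥(C.map A.mkQ) < ℵ₀ →
    ∃ D ≤ C, A ⊓ D = ⊥ ∧ A ⊔ D = C

def DSumCountableRank (R : Type u) [CommRing R] (N : Type v) [AddCommGroup N]
    [Module R N] : Prop :=
  ∃ (ι : Type v) (f : ι → Submodule R N), iSupIndep f ∧
    iSup f = ⊤ ∧ ∀ i, Module.rank R ↥(f i) ≤ ℵ₀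

/-- `N` is finitely decomposable. -/
def FinDecomp (R : Type u) [CommRing R] (N : Type v) [AddCommGroup N]
    [Module R N] : Prop :=
  ∃ (ι : Type v) (f : ι → Submodule R N), iSupIndep f ∧
    iSup f = ⊤ ∧ ∀ i, Module.rank R ↥(f i) < ℵ₀

def rdClosure (Y : Set M) : Submodule R M :=
  sInf {N : Submodule R M | IsRD N ∧ Y ⊆ ↑N}

/-!
If `A` is RD*, then countable rank submodules of `M ⧸ A` lift to countable rank submodules too: a
countable rank `Q` is the union of the chain of finite rank submodules `Qₙ` of elements with a
nonzero multiple in the span of the first `n` members of a maximal independent subset of `Q`, and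
a countable union of countable rank submodules has countable rank. As
`M ⧸ B ≃ (M ⧸ A) ⧸ (B ⧸ A)`, lifting a finite rank submodule of `M ⧸ B` to `M` is the same as
lifting it to `M ⧸ A` and then lifting the resulting countable rank submodule to `M`. The RD
conditions pass along `M → M ⧸ A` in both directions by a direct computation.
-/

open Submodule

variable {N P : Type v} [AddCommGroup N] [Module R N] [AddCommGroup P] [Module R P]

section

omit [IsDomain R]

theorem IsRD.map {f : M →ₗ[R] N} (hf : Function.Surjective f) {B : Submodule R M}
    (hker : LinearMap.ker f ≤ B) (hB : IsRD B) : IsRD (B.map f) := by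
  intro r y hy
  obtain ⟨m, rfl⟩ := hf y
  have hrm : r • m ∈ B := by
    rw [← map_smul, ← mem_comap, comap_map_eq, sup_eq_left.mpr hker] at hy
    exact hy
  obtain ⟨b, hb, hrb⟩ := hB r m hrm
  exact ⟨f b, mem_map_of_mem hb, by rw [← map_smul, hrb, map_smul]⟩

theorem IsRD.of_map {f : M →ₗ[R] N} {B : Submodule R M} (hker : LinearMap.ker f ≤ B)
    (hK : IsRD (LinearMap.ker f)) (hB : IsRD (B.map f)) : IsRD B := by
  intro r m hrm
  obtain ⟨_, ⟨b, hb, rfl⟩, hrb⟩ := hB r (f m) (by rw [← map_smul]; exact mem_map_of_mem hrm)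
  obtain ⟨a, ha, hra⟩ := hK r (b - m) <| by
    rw [LinearMap.mem_ker, map_smul, map_sub, smul_sub, hrb, sub_self]
  exact ⟨b - a, B.sub_mem hb (hker ha), by rw [smul_sub, hra, smul_sub, sub_sub_cancel]⟩

namespace LinearMap

def LiftsFiniteRank (f : M →ₗ[R] N) : Prop :=
  ∀ Q : Submodule R N, Module.rank R Q < ℵ₀ →
    ∃ C : Submodule R M, Module.rank R C ≤ ℵ₀ ∧ C.map f = Q

def LiftsCountableRank (f : M →ₗ[R] N) : Prop :=
  ∀ Q : Submodule R N, Module.rank R Q ≤ ℵ₀ →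
    ∃ C : Submodule R M, Module.rank R C ≤ ℵ₀ ∧ C.map f = Q

variable {f : M →ₗ[R] N} {g : N →ₗ[R] P}

theorem LiftsFiniteRank.of_comp (h : (g ∘ₗ f).LiftsFiniteRank) : g.LiftsFiniteRank := by
  intro Q hQ
  obtain ⟨C, hC, hCQ⟩ := h Q hQ
  exact ⟨C.map f, (rank_map_le f C).trans hC, by rw [← map_comp, hCQ]⟩

theorem LiftsFiniteRank.comp (hg : g.LiftsFiniteRank) (hf : f.LiftsCountableRank) :
    (g ∘ₗ f).LiftsFiniteRank := by
  intro Q hQ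
  obtain ⟨C', hC', hC'Q⟩ := hg Q hQ
  obtain ⟨C, hC, hCC'⟩ := hf C' hC'
  exact ⟨C, hC, by rw [map_comp, hCC', hC'Q]⟩

theorem LiftsFiniteRank.linearEquiv_comp (hf : f.LiftsFiniteRank) (e : N ≃ₗ[R] P) :
    ((e : N →ₗ[R] P) ∘ₗ f).LiftsFiniteRank := by
  intro Q hQ
  obtain ⟨C, hC, hCQ⟩ := hf (Q.map (e.symm : P →ₗ[R] N)) (by rwa [e.symm.rank_map_eq])
  exact ⟨C, hC, by rw [map_comp, hCQ, ← map_comp]; simp⟩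

theorem liftsFiniteRank_linearEquiv_comp_iff (e : N ≃ₗ[R] P) :
    ((e : N →ₗ[R] P) ∘ₗ f).LiftsFiniteRank ↔ f.LiftsFiniteRank := by
  refine ⟨fun h => ?_, fun h => h.linearEquiv_comp e⟩
  convert h.linearEquiv_comp e.symm
  ext; simp

end LinearMap

end

theorem LinearIndependent.smul_of_ne_zero {ι : Type*} {v : ι → M} (hv : LinearIndependent R v)
    {r : ι → R} (hr : ∀ i, r i ≠ 0) : LinearIndependent R (r • v) := by
  rw [linearIndependent_iff'] at hv ⊢
  intro s g hg i hi
  have := hv s (g * r) (by simpa only [Pi.smul_apply', Pi.mul_apply, mul_smul] using hg) i hi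
  exact (mul_eq_zero.mp this).resolve_right (hr i)

namespace Submodule

def saturation (S : Submodule R M) : Submodule R M where
  carrier := {x | ∃ r : R, r ≠ 0 ∧ r • x ∈ S}
  zero_mem' := ⟨1, one_ne_zero, by simp⟩
  add_mem' := by
    rintro x y ⟨r, hr, hrx⟩ ⟨s, hs, hsy⟩
    refine ⟨r * s, mul_ne_zero hr hs, ?_⟩
    rw [smul_add, mul_smul, mul_smul, smul_comm r s x]
    exact S.add_mem (S.smul_mem s hrx) (S.smul_mem r hsy)
  smul_mem' := by
    rintro c x ⟨r, hr, hrx⟩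
    exact ⟨r, hr, by rw [smul_comm]; exact S.smul_mem c hrx⟩

theorem saturation_mono {S T : Submodule R M} (h : S ≤ T) : S.saturation ≤ T.saturation :=
  fun _ ⟨r, hr, hrx⟩ => ⟨r, hr, h hrx⟩

theorem rank_saturation_le (S : Submodule R M) :
    Module.rank R S.saturation ≤ Module.rank R S := by
  choose r hr hrS using fun x : S.saturation => x.2
  rw [Module.rank_def]
  refine ciSup_le' fun ⟨s, hs⟩ => ?_
  have hscaled : LinearIndependent R
      (S.subtype ∘ fun x : s => (⟨r x • ((x : S.saturation) : M), hrS x⟩ : S)) :=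
    (hs.map' _ (ker_subtype _)).smul_of_ne_zero fun x => hr x
  exact (LinearIndependent.of_comp _ hscaled).cardinal_le_rank

theorem exists_le_saturation_span (Q : Submodule R M) :
    ∃ J ⊆ (Q : Set M), #J ≤ Module.rank R Q ∧ Q ≤ (span R J).saturation := by
  obtain ⟨I, hI, hmax⟩ := exists_maximal_linearIndepOn R (Subtype.val : Q → M)
  refine ⟨Subtype.val '' I, by rintro _ ⟨x, -, rfl⟩; exact x.2, ?_, fun x hx => ?_⟩
  · rw [mk_image_eq Subtype.val_injective]
    exact (LinearIndependent.of_comp Q.subtype hI).cardinal_le_rank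
  · by_cases h : ⟨x, hx⟩ ∈ I
    · exact ⟨1, one_ne_zero, by rw [one_smul]; exact subset_span ⟨_, h, rfl⟩⟩
    · exact hmax _ h

end Submodule

theorem rank_iSup_le_aleph0 {ι : Type*} [Countable ι] {C : ι → Submodule R M}
    (hC : ∀ i, Module.rank R (C i) ≤ ℵ₀) : Module.rank R ↥(⨆ i, C i) ≤ ℵ₀ := by
  choose J _ hJrank hCJ using fun i => (C i).exists_le_saturation_span
  have hJ : (⋃ i, J i).Countable :=
    Set.countable_iUnion fun i => le_aleph0_iff_set_countable.mp ((hJrank i).trans (hC i))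
  calc Module.rank R ↥(⨆ i, C i) ≤ Module.rank R (span R (⋃ i, J i)).saturation :=
        rank_mono <| iSup_le fun i =>
          (hCJ i).trans (saturation_mono (span_mono (Set.subset_iUnion J i)))
    _ ≤ Module.rank R (span R (⋃ i, J i)) := rank_saturation_le _
    _ ≤ #(⋃ i, J i) := rank_span_le _
    _ ≤ ℵ₀ := hJ.le_aleph0

theorem exists_iSup_eq_of_rank_le_aleph0 {Q : Submodule R M} (hQ : Module.rank R Q ≤ ℵ₀) :
    ∃ D : ℕ → Submodule R M, (∀ n, Module.rank R (D n) < ℵ₀) ∧ ⨆ n, D n = Q := by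
  obtain ⟨J, -, hJrank, hQJ⟩ := Q.exists_le_saturation_span
  obtain ⟨f, hf⟩ := ((le_aleph0_iff_set_countable.mp (hJrank.trans hQ)).insert 0).exists_eq_range
    (Set.insert_nonempty _ _)
  set S : ℕ → Submodule R M := fun n => span R (f '' Set.Iic n)
  have hS : Monotone S := fun m n h => span_mono (Set.image_mono (Set.Iic_subset_Iic.mpr h))
  have hJS : span R J ≤ ⨆ n, S n := span_le.mpr fun y hy => by
    obtain ⟨n, rfl⟩ : y ∈ Set.range f := hf ▸ Set.mem_insert_of_mem 0 hy
    exact mem_iSup_of_mem n (subset_span ⟨n, Set.self_mem_Iic, rfl⟩)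
  refine ⟨fun n => Q ⊓ (S n).saturation, fun n => ?_,
    le_antisymm (iSup_le fun n => inf_le_left) fun x hx => ?_⟩
  · calc Module.rank R ↥(Q ⊓ (S n).saturation) ≤ Module.rank R (S n) :=
          (rank_mono inf_le_right).trans (rank_saturation_le _)
      _ ≤ #(f '' Set.Iic n) := rank_span_le _
      _ < ℵ₀ := ((Set.finite_Iic n).image f).lt_aleph0
  · obtain ⟨r, hr, hrx⟩ := hQJ hx
    obtain ⟨n, hn⟩ := (mem_iSup_of_directed S hS.directed_le).mp (hJS hrx)
    exact mem_iSup_of_mem n ⟨hx, r, hr, hn⟩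

theorem LinearMap.LiftsFiniteRank.liftsCountableRank {f : M →ₗ[R] N}
    (hf : f.LiftsFiniteRank) : f.LiftsCountableRank := by
  intro Q hQ
  obtain ⟨D, hDrank, rfl⟩ := exists_iSup_eq_of_rank_le_aleph0 hQ
  choose C hCrank hCD using fun n => hf (D n) (hDrank n)
  exact ⟨⨆ n, C n, rank_iSup_le_aleph0 hCrank, by rw [Submodule.map_iSup]; exact iSup_congr hCD⟩

theorem rdStar_iff_quotient_rdStar_general (A B : Submodule R M)
    (hAB : A ≤ B) (hA : IsRDStar A) : IsRDStar B ↔ IsRDStar (B.map A.mkQ) := by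
  set e := quotientQuotientEquivQuotient A B hAB
  have he : (e : _ →ₗ[R] M ⧸ B) ∘ₗ (B.map A.mkQ).mkQ ∘ₗ A.mkQ = B.mkQ := LinearMap.ext fun _ => rfl
  have hker : LinearMap.ker A.mkQ ≤ B := (ker_mkQ A).trans_le hAB
  have hAlift : A.mkQ.LiftsCountableRank := LinearMap.LiftsFiniteRank.liftsCountableRank hA.2
  constructor
  · rintro ⟨hBrd, hB⟩
    refine ⟨hBrd.map A.mkQ_surjective hker, LinearMap.LiftsFiniteRank.of_comp (f := A.mkQ) ?_⟩
    rw [← LinearMap.liftsFiniteRank_linearEquiv_comp_iff e, he]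
    exact hB
  · rintro ⟨hB'rd, hB'⟩
    refine ⟨IsRD.of_map hker (by rw [ker_mkQ]; exact hA.1) hB'rd, ?_⟩
    rw [← he]
    exact (LinearMap.LiftsFiniteRank.comp hB' hAlift).linearEquiv_comp e

/-- With `A` RD* in `M` and `A ≤ B`, `B` is RD* in `M` iff `B/A` is RD* in `M/A`. -/
theorem rdStar_iff_quotient_rdStar [NoZeroSMulDivisors R M] (A B : Submodule R M)
    (hAB : A ≤ B) (hA : IsRDStar A) : IsRDStar B ↔ IsRDStar (B.map A.mkQ) :=
  rdStar_iff_quotient_rdStar_general A B hAB hA
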